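/- Let S be a slice of an LBFS of a graph G with maximal subslices x, S_1, ..., S_k in order, with N(x) ∩ S ≠ ∅. Then for every i > 1 such that S_i contains a vertex with an incident active edge for S, there exists a vertex y in some S_ℓ with ℓ < i that is adjacent to every vertex of S_i. -/

import Mathlib

/-- The LBFS label of vertex `v` just before step `t`: for each earlier step `i < t`
(in increasing order of `i`) at which a neighbour of `v` was explored, the value `n - i`
is appended. -/
def lbfsLabel {V : Type*} (G : SimpleGraph V) [DecidableRel G.Adj] (σ : ℕ → V)
    (n t : ℕ) (v : V) : List ℕ :=
  ((List.range t).filter (fun i => decide (G.Adj (σ i) v))).map (fun i => n - i)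

/-- `σ` (restricted to `[0,n)`) is a Lexicographic Breadth-First Search ordering of `G`:
it enumerates all vertices, and at each step the chosen vertex has lexicographically
largest label among the unexplored vertices. -/
def IsLBFS {V : Type*} (G : SimpleGraph V) [DecidableRel G.Adj] (n : ℕ) (σ : ℕ → V) : Prop :=
  Set.BijOn σ (Set.Iio n) Set.univ ∧
    ∀ t < n, ∀ v : V, (∀ i < t, σ i ≠ v) →
      ¬ List.Lex (· < ·) (lbfsLabel G σ n t (σ t)) (lbfsLabel G σ n t v)

/-- The slice defined at step `t`: the unexplored vertices sharing the (lexicographically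
largest) label of the chosen vertex `σ t` just before step `t`. -/
def sliceAt {V : Type*} (G : SimpleGraph V) [DecidableRel G.Adj] (σ : ℕ → V) (n t : ℕ) :
    Set V :=
  {v | (∀ i < t, σ i ≠ v) ∧ lbfsLabel G σ n t v = lbfsLabel G σ n t (σ t)}

/-- `S` is a slice of the LBFS. -/
def IsSlice {V : Type*} (G : SimpleGraph V) [DecidableRel G.Adj] (σ : ℕ → V) (n : ℕ)
    (S : Set V) : Prop :=
  ∃ t < n, S = sliceAt G σ n t

/-- The slice defined at step `u` is a maximal (proper) subslice of the slice at step `t`. -/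
def IsMaxSubsliceAt {V : Type*} (G : SimpleGraph V) [DecidableRel G.Adj] (σ : ℕ → V)
    (n t u : ℕ) : Prop :=
  u < n ∧ sliceAt G σ n u ⊂ sliceAt G σ n t ∧
    ∀ w < n, ¬(sliceAt G σ n u ⊂ sliceAt G σ n w ∧ sliceAt G σ n w ⊂ sliceAt G σ n t)

/-- `u 1, …, u k` are the steps defining the maximal subslices `S_1, …, S_k` of the slice
at step `t`, listed in the order the LBFS defines them (the initial vertex `σ t`, as a
singleton, being by convention the zeroth maximal subslice). -/
def MaxSubsliceEnum {V : Type*} (G : SimpleGraph V) [DecidableRel G.Adj] (σ : ℕ → V)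
    (n t k : ℕ) (u : ℕ → ℕ) : Prop :=
  (∀ i, 1 ≤ i → i ≤ k → IsMaxSubsliceAt G σ n t (u i)) ∧
  (∀ i j, 1 ≤ i → i < j → j ≤ k → u i < u j) ∧
  (∀ i, 1 ≤ i → i ≤ k → t < u i) ∧
  (∀ w, w < n → IsMaxSubsliceAt G σ n t w →
    ∃ i, 1 ≤ i ∧ i ≤ k ∧ sliceAt G σ n w = sliceAt G σ n (u i))

/-- The edge `ab` is active for the slice at step `t`: both endpoints lie in that slice
but in different maximal subslices of it (i.e. no maximal subslice contains both). -/
def activeFor {V : Type*} (G : SimpleGraph V) [DecidableRel G.Adj] (σ : ℕ → V)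
    (n t : ℕ) (a b : V) : Prop :=
  G.Adj a b ∧ a ∈ sliceAt G σ n t ∧ b ∈ sliceAt G σ n t ∧
    ∀ w, IsMaxSubsliceAt G σ n t w → ¬(a ∈ sliceAt G σ n w ∧ b ∈ sliceAt G σ n w)
/-- `d` is a transitive orientation of the subgraph of `G` induced on `S`:
each edge of `G[S]` gets exactly one direction, and directions compose transitively. -/
def IsTransOrientationOn {V : Type*} (G : SimpleGraph V) (S : Set V)
    (d : V → V → Prop) : Prop :=
  (∀ a b, d a b → G.Adj a b ∧ a ∈ S ∧ b ∈ S) ∧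
  (∀ a b, G.Adj a b → a ∈ S → b ∈ S → d a b ∨ d b a) ∧
  (∀ a b, d a b → ¬ d b a) ∧
  (∀ a b c, d a b → d b c → d a c)

/-- `M` is a module of `G`: every vertex outside `M` is adjacent to all of `M` or to
none of `M`. -/
def IsModule {V : Type*} (G : SimpleGraph V) (M : Set V) : Prop :=
  ∀ v ∉ M, (∀ m ∈ M, G.Adj v m) ∨ (∀ m ∈ M, ¬ G.Adj v m)

/-- `G` is prime: it has no non-trivial module. -/
def IsPrimeGraph {V : Type*} (G : SimpleGraph V) : Prop :=
  ∀ M : Set V, IsModule G M → M.Subsingleton ∨ M = Set.univ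

/-- `C` is a connected component of the subgraph of `G` induced on `S`. -/
def IsComponentOn {V : Type*} (G : SimpleGraph V) (S C : Set V) : Prop :=
  C ⊆ S ∧ C.Nonempty ∧
  (∀ a ∈ C, ∀ b ∈ C, Relation.ReflTransGen (fun p q => p ∈ S ∧ q ∈ S ∧ G.Adj p q) a b) ∧
  (∀ a ∈ C, ∀ b ∈ S, G.Adj a b → b ∈ C)

/-- `C` is a co-component of `G[S]`: a connected component of the complement of the
subgraph of `G` induced on `S`. -/
def IsCoComponentOn {V : Type*} (G : SimpleGraph V) (S C : Set V) : Prop :=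
  C ⊆ S ∧ C.Nonempty ∧
  (∀ a ∈ C, ∀ b ∈ C,
    Relation.ReflTransGen (fun p q => p ∈ S ∧ q ∈ S ∧ p ≠ q ∧ ¬ G.Adj p q) a b) ∧
  (∀ a ∈ C, ∀ b ∈ S, a ≠ b → ¬ G.Adj a b → b ∈ C)
/-! Vertices of `S_i` have the same neighbours among all vertices explored before `S_i` starts.
An active edge `vw` with `v ∈ S_i` produces such an explored neighbour `y` of `S_i`: either `w`
itself is explored before `S_i` starts, or it is explored later, and then the first explored
vertex that distinguishes `w` from `S_i` is a neighbour of `S_i`, since otherwise `w` would beat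
the first vertex of `S_i` in the LBFS. All neighbours of `x` in `S` lie in `S_1`, so `y ≠ x`;
hence `y` is explored inside `S`, before `S_i`, and lies in an earlier maximal subslice. -/

theorem List.lex_cons_of_forall_lt {l : List ℕ} {y : ℕ} (h : ∀ x ∈ l, x < y)
    (l' : List ℕ) :
    List.Lex (· < ·) l (y :: l') := by
  cases l with
  | nil => exact List.Lex.nil
  | cons x _ => exact List.Lex.rel (h x List.mem_cons_self)

def AgreeBefore {V : Type*} (G : SimpleGraph V) (σ : ℕ → V) (s : ℕ) (v w : V) : Prop :=
  ∀ i < s, (G.Adj (σ i) v ↔ G.Adj (σ i) w)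

section LBFS

variable {V : Type*} {G : SimpleGraph V} {σ : ℕ → V} {n r s t w : ℕ} {a b v : V}

theorem AgreeBefore.symm (h : AgreeBefore G σ s a b) : AgreeBefore G σ s b a :=
  fun i hi => (h i hi).symm

theorem AgreeBefore.trans {c : V} (hab : AgreeBefore G σ s a b) (hbc : AgreeBefore G σ s b c) :
    AgreeBefore G σ s a c :=
  fun i hi => (hab i hi).trans (hbc i hi)

theorem AgreeBefore.mono (hrs : r ≤ s) (h : AgreeBefore G σ s a b) : AgreeBefore G σ r a b :=
  fun i hi => h i (hi.trans_le hrs)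

theorem exists_first_disagreement (h : ¬ AgreeBefore G σ s a b) :
    ∃ r < s, AgreeBefore G σ r a b ∧ ¬ (G.Adj (σ r) a ↔ G.Adj (σ r) b) := by
  classical
  have hex : ∃ r, r < s ∧ ¬ (G.Adj (σ r) a ↔ G.Adj (σ r) b) := by
    simpa [AgreeBefore] using h
  obtain ⟨hlt, hdiff⟩ := Nat.find_spec hex
  refine ⟨Nat.find hex, hlt, fun i hi => ?_, hdiff⟩
  by_contra hi'
  exact Nat.find_min hex hi ⟨hi.trans hlt, hi'⟩

variable [DecidableRel G.Adj]

theorem lbfsLabel_add (r m : ℕ) (v : V) :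
    lbfsLabel G σ n (r + m) v = lbfsLabel G σ n r v ++
      (((List.range m).map (r + ·)).filter (fun i => G.Adj (σ i) v)).map (n - ·) := by
  simp only [lbfsLabel, List.range_add, List.filter_append, List.map_append]

theorem lbfsLabel_succ (r : ℕ) (v : V) :
    lbfsLabel G σ n (r + 1) v =
      lbfsLabel G σ n r v ++ if G.Adj (σ r) v then [n - r] else [] := by
  by_cases h : G.Adj (σ r) v <;> simp [lbfsLabel_add, h]

theorem sub_mem_lbfsLabel_iff {i : ℕ} (hi : i < s) (hs : s ≤ n) :
    n - i ∈ lbfsLabel G σ n s v ↔ G.Adj (σ i) v := by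
  simp only [lbfsLabel, List.mem_map, List.mem_filter, List.mem_range, decide_eq_true_eq]
  constructor
  · rintro ⟨j, ⟨hj, hadj⟩, hji⟩
    obtain rfl : j = i := by omega
    exact hadj
  · exact fun h => ⟨i, ⟨hi, h⟩, rfl⟩

theorem lbfsLabel_eq_iff (hs : s ≤ n) :
    lbfsLabel G σ n s a = lbfsLabel G σ n s b ↔ AgreeBefore G σ s a b := by
  constructor
  · intro h i hi
    rw [← sub_mem_lbfsLabel_iff hi hs, ← sub_mem_lbfsLabel_iff hi hs, h]
  · intro h
    unfold lbfsLabel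
    congr 1
    exact List.filter_congr fun i hi => by simp [h i (List.mem_range.1 hi)]

theorem lbfsLabel_lex_of_agreeBefore (hrs : r < s) (hs : s ≤ n) (hab : AgreeBefore G σ r a b)
    (ha : ¬ G.Adj (σ r) a) (hb : G.Adj (σ r) b) :
    List.Lex (· < ·) (lbfsLabel G σ n s a) (lbfsLabel G σ n s b) := by
  obtain ⟨m, rfl⟩ : ∃ m, s = r + 1 + m := ⟨s - (r + 1), by omega⟩
  rw [lbfsLabel_add (r + 1) m a, lbfsLabel_add (r + 1) m b, lbfsLabel_succ, lbfsLabel_succ,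
    if_neg ha, if_pos hb, (lbfsLabel_eq_iff (by omega)).2 hab, List.append_nil,
    List.append_assoc, List.singleton_append]
  refine List.Lex.append_left _ (List.lex_cons_of_forall_lt (fun x hx => ?_) _) _
  simp only [List.mem_map, List.mem_filter, List.mem_range] at hx
  omega

theorem mem_sliceAt_iff (ht : t ≤ n) :
    v ∈ sliceAt G σ n t ↔ (∀ i < t, σ i ≠ v) ∧ AgreeBefore G σ t v (σ t) :=
  and_congr Iff.rfl (lbfsLabel_eq_iff ht)

theorem le_of_mem_sliceAt (h : σ s ∈ sliceAt G σ n t) : t ≤ s :=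
  not_lt.1 fun hst => h.1 s hst rfl

theorem sliceAt_subset_of_mem (hwt : w ≤ t) (ht : t ≤ n) (hvw : v ∈ sliceAt G σ n w)
    (hvt : v ∈ sliceAt G σ n t) : sliceAt G σ n t ⊆ sliceAt G σ n w := by
  intro z hz
  rw [mem_sliceAt_iff (hwt.trans ht)] at hvw ⊢
  rw [mem_sliceAt_iff ht] at hvt hz
  exact ⟨fun i hi => hz.1 i (hi.trans_le hwt), ((hz.2.trans hvt.2.symm).mono hwt).trans hvw.2⟩

namespace IsLBFS

variable (hL : IsLBFS G n σ)
include hL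

theorem apply_ne_of_lt {i : ℕ} (hs : s < n) (hi : i < s) : σ i ≠ σ s := fun h =>
  (hL.1.2.1 (Set.mem_Iio.2 (hi.trans hs)) (Set.mem_Iio.2 hs) h ▸ hi).false

theorem self_mem_sliceAt (hs : s < n) : σ s ∈ sliceAt G σ n s :=
  ⟨fun _ hi => hL.apply_ne_of_lt hs hi, rfl⟩

theorem eq_of_sliceAt_eq (hs : s < n) (ht : t < n) (h : sliceAt G σ n s = sliceAt G σ n t) :
    s = t :=
  le_antisymm (le_of_mem_sliceAt (h ▸ hL.self_mem_sliceAt ht))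
    (le_of_mem_sliceAt (h ▸ hL.self_mem_sliceAt hs))

theorem sliceAt_ssubset_of_mem (hts : t < s) (hs : s ≤ n) (hvt : v ∈ sliceAt G σ n t)
    (hvs : v ∈ sliceAt G σ n s) : sliceAt G σ n s ⊂ sliceAt G σ n t :=
  Set.ssubset_iff_of_subset (sliceAt_subset_of_mem hts.le hs hvt hvs) |>.2
    ⟨σ t, hL.self_mem_sliceAt (hts.trans_le hs), fun h => h.1 t hts rfl⟩

theorem adj_of_agreeBefore (hs : s < n) (hw : ∀ i < s, σ i ≠ b) (hrs : r < s)
    (hagree : AgreeBefore G σ r (σ s) b) (hadj : G.Adj (σ r) b) : G.Adj (σ r) (σ s) := by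
  by_contra h
  exact hL.2 s hs b hw (lbfsLabel_lex_of_agreeBefore hrs hs.le hagree h hadj)

theorem mem_sliceAt_of_unexplored (hws : w ≤ s) (hs : s < n) (hv : v ∈ sliceAt G σ n w)
    (hun : ∀ i < s, σ i ≠ v) : σ s ∈ sliceAt G σ n w := by
  have hwn : w < n := hws.trans_lt hs
  have hvw : AgreeBefore G σ w v (σ w) := ((mem_sliceAt_iff hwn.le).1 hv).2
  have hsw : ∀ i < w, σ i ≠ σ s := fun i hi => hL.apply_ne_of_lt hs (hi.trans_le hws)
  by_contra hσs
  have hdis : ¬ AgreeBefore G σ w (σ s) v := fun h =>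
    hσs ((mem_sliceAt_iff hwn.le).2 ⟨hsw, h.trans hvw⟩)
  obtain ⟨r, hrw, hagree, hdiff⟩ := exists_first_disagreement hdis
  refine hdiff
    ⟨fun h => (hvw r hrw).2 ?_, hL.adj_of_agreeBefore hs hun (hrw.trans_le hws) hagree⟩
  exact hL.adj_of_agreeBefore hwn hsw hrw (hagree.trans (hvw.mono hrw.le)).symm h

theorem exists_adj_and_not_adj_of_notMem_sliceAt (hs : s < n) (hb : ∀ i < s, σ i ≠ b)
    (hbs : b ∉ sliceAt G σ n s) :
    ∃ r < s, G.Adj (σ r) (σ s) ∧ ¬ G.Adj (σ r) b := by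
  have hdis : ¬ AgreeBefore G σ s b (σ s) := fun h =>
    hbs ((mem_sliceAt_iff hs.le).2 ⟨hb, h⟩)
  obtain ⟨r, hrs, hagree, hdiff⟩ := exists_first_disagreement hdis
  have := hL.adj_of_agreeBefore hs hb hrs hagree.symm
  exact ⟨r, hrs, by tauto⟩

theorem mem_sliceAt_succ_of_adj (ht : t + 1 < n) (hv : v ∈ sliceAt G σ n t)
    (hadj : G.Adj (σ t) v) : v ∈ sliceAt G σ n (t + 1) := by
  have hun : ∀ i < t + 1, σ i ≠ v := fun i hi =>
    (Nat.lt_succ_iff_lt_or_eq.1 hi).elim (hv.1 i) (· ▸ hadj.ne)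
  have hnext : σ (t + 1) ∈ sliceAt G σ n t :=
    hL.mem_sliceAt_of_unexplored t.le_succ ht hv hun
  rw [mem_sliceAt_iff ht.le]
  rw [mem_sliceAt_iff (by omega)] at hv hnext
  have hagree : AgreeBefore G σ t (σ (t + 1)) v := hnext.2.trans hv.2.symm
  have hadj' : G.Adj (σ t) (σ (t + 1)) := hL.adj_of_agreeBefore ht hun t.lt_succ_self hagree hadj
  refine ⟨hun, fun i hi => ?_⟩
  rcases Nat.lt_succ_iff_lt_or_eq.1 hi with hi | rfl
  · exact hagree.symm i hi
  · exact iff_of_true hadj hadj'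

theorem exists_adj_of_activeFor {p : ℕ} (hp : IsMaxSubsliceAt G σ n t p)
    (hv : v ∈ sliceAt G σ n p) (hvb : activeFor G σ n t v b) :
    ∃ r, t ≤ r ∧ r < p ∧ G.Adj (σ r) (σ p) := by
  obtain ⟨hadj, -, hbt, hsep⟩ := hvb
  have hvp : AgreeBefore G σ p v (σ p) := ((mem_sliceAt_iff hp.1.le).1 hv).2
  obtain ⟨s, hs, rfl⟩ := hL.1.2.2 (Set.mem_univ b)
  rcases lt_or_ge s p with hsp | hps
  · exact ⟨s, le_of_mem_sliceAt hbt, hsp, (hvp s hsp).1 hadj.symm⟩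
  have hbp : σ s ∉ sliceAt G σ n p := fun h => hsep p hp ⟨hv, h⟩
  obtain ⟨r, hrp, hadjp, hnadj⟩ :=
    hL.exists_adj_and_not_adj_of_notMem_sliceAt hp.1
      (fun i hi => hL.apply_ne_of_lt hs (hi.trans_le hps)) hbp
  refine ⟨r, not_lt.1 fun hrt => hnadj ?_, hrp, hadjp⟩
  have hpt : σ p ∈ sliceAt G σ n t := hp.2.1.subset (hL.self_mem_sliceAt hp.1)
  rw [mem_sliceAt_iff (hp.1.le.trans' (le_of_mem_sliceAt hpt))] at hbt hpt
  exact ((hbt.2.trans hpt.2.symm) r hrt).2 hadjp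

end IsLBFS

namespace MaxSubsliceEnum

variable {k : ℕ} {u : ℕ → ℕ} (hL : IsLBFS G n σ) (hu : MaxSubsliceEnum G σ n t k u)
include hL hu

theorem exists_mem_sliceAt (hts : t < s) (hs : s < n) (hmem : σ s ∈ sliceAt G σ n t) :
    ∃ ℓ, 1 ≤ ℓ ∧ ℓ ≤ k ∧ σ s ∈ sliceAt G σ n (u ℓ) ∧ u ℓ ≤ s := by
  classical
  have hex : ∃ w, w < n ∧ σ s ∈ sliceAt G σ n w ∧ sliceAt G σ n w ⊂ sliceAt G σ n t :=
    ⟨s, hs, hL.self_mem_sliceAt hs,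
      hL.sliceAt_ssubset_of_mem hts hs.le hmem (hL.self_mem_sliceAt hs)⟩
  obtain ⟨hwn, hsw, hwt⟩ := Nat.find_spec hex
  have hmax : IsMaxSubsliceAt G σ n t (Nat.find hex) := by
    refine ⟨hwn, hwt, fun w' hw'n ⟨h1, h2⟩ => h1.ne ?_⟩
    have hle : Nat.find hex ≤ w' := Nat.find_min' hex ⟨hw'n, h1.subset hsw, h2⟩
    have hge : w' ≤ Nat.find hex := le_of_mem_sliceAt (h1.subset (hL.self_mem_sliceAt hwn))
    rw [le_antisymm hle hge]
  obtain ⟨ℓ, hℓ1, hℓk, heq⟩ := hu.2.2.2 _ hwn hmax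
  exact ⟨ℓ, hℓ1, hℓk, heq ▸ hsw, le_of_mem_sliceAt (heq ▸ hsw)⟩

/-- The LBFS explores a neighbour of `x = σ t` right after `x`, so `S_1` is the slice of all
neighbours of `x` in `S`. -/
theorem not_adj_of_one_lt {i : ℕ} (hi : 1 < i) (hik : i ≤ k) (hv : v ∈ sliceAt G σ n (u i)) :
    ¬ G.Adj (σ t) v := by
  intro hadj
  have hmax : IsMaxSubsliceAt G σ n t (u i) := hu.1 i hi.le hik
  have hin : u i < n := hmax.1
  have ht1 : t < u 1 := hu.2.2.1 1 le_rfl (hi.le.trans hik)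
  have h1i : u 1 < u i := hu.2.1 1 i le_rfl hi hik
  have hvt : v ∈ sliceAt G σ n t := hmax.2.1.subset hv
  have hv1 : v ∈ sliceAt G σ n (t + 1) := hL.mem_sliceAt_succ_of_adj (by omega) hvt hadj
  have hsub : sliceAt G σ n (u i) ⊆ sliceAt G σ n (t + 1) :=
    sliceAt_subset_of_mem (by omega) hmax.1.le hv1 hv
  have heq : sliceAt G σ n (u i) = sliceAt G σ n (t + 1) := by
    by_contra hne
    exact hmax.2.2 (t + 1) (by omega)
      ⟨hsub.ssubset_of_ne hne, hL.sliceAt_ssubset_of_mem t.lt_succ_self (by omega) hvt hv1⟩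
  have := hL.eq_of_sliceAt_eq hmax.1 (by omega) heq
  omega

end MaxSubsliceEnum

end LBFS

theorem connected_subslice_has_universal_vertex_general {V : Type*} (G : SimpleGraph V)
    [DecidableRel G.Adj] (n : ℕ) (σ : ℕ → V) (hL : IsLBFS G n σ)
    (t : ℕ) (k : ℕ) (u : ℕ → ℕ) (hu : MaxSubsliceEnum G σ n t k u) :
    ∀ i, 1 < i → i ≤ k →
      (∃ v ∈ sliceAt G σ n (u i), ∃ w, activeFor G σ n t v w) →
      ∃ ℓ, 1 ≤ ℓ ∧ ℓ < i ∧ ∃ y ∈ sliceAt G σ n (u ℓ),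
        ∀ z ∈ sliceAt G σ n (u i), G.Adj y z := by
  rintro i hi hik ⟨v, hv, w, hvw⟩
  have hmax : IsMaxSubsliceAt G σ n t (u i) := hu.1 i hi.le hik
  have hσu : σ (u i) ∈ sliceAt G σ n (u i) := hL.self_mem_sliceAt hmax.1
  obtain ⟨r, htr, hri, hadj⟩ := hL.exists_adj_of_activeFor hmax hv hvw
  have htr' : t < r := htr.lt_of_ne fun h => hu.not_adj_of_one_lt hL hi hik hσu (h ▸ hadj)
  have hr : σ r ∈ sliceAt G σ n t :=
    hL.mem_sliceAt_of_unexplored htr (hri.trans hmax.1) (hmax.2.1.subset hσu)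
      fun j hj => hL.apply_ne_of_lt hmax.1 (hj.trans hri)
  obtain ⟨ℓ, hℓ, hℓk, hrℓ, huℓ⟩ := hu.exists_mem_sliceAt hL htr' (hri.trans hmax.1) hr
  have hℓi : ℓ < i := by
    by_contra! hiℓ
    obtain rfl | hlt := hiℓ.eq_or_lt
    · omega
    · have := hu.2.1 i ℓ hi.le hlt hℓk
      omega
  exact ⟨ℓ, hℓ, hℓi, σ r, hrℓ,
    fun z hz => ((mem_sliceAt_iff hmax.1.le).1 hz).2 r hri |>.2 hadj⟩

/-- if `N(x) ∩ S ≠ ∅` and the maximal subslice `S_i` (i > 1) contains a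
vertex with an incident active edge for `S`, then some vertex of an earlier maximal
subslice `S_ℓ` (ℓ < i) is universal to `S_i`. -/
theorem connected_subslice_has_universal_vertex {V : Type*} (G : SimpleGraph V)
    [DecidableRel G.Adj] (n : ℕ) (σ : ℕ → V) (hL : IsLBFS G n σ)
    (t : ℕ) (ht : t < n) (k : ℕ) (u : ℕ → ℕ) (hu : MaxSubsliceEnum G σ n t k u)
    (hx : G.neighborSet (σ t) ∩ sliceAt G σ n t ≠ ∅) :
    ∀ i, 1 < i → i ≤ k →
      (∃ v ∈ sliceAt G σ n (u i), ∃ w, activeFor G σ n t v w) →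
      ∃ ℓ, 1 ≤ ℓ ∧ ℓ < i ∧ ∃ y ∈ sliceAt G σ n (u ℓ),
        ∀ z ∈ sliceAt G σ n (u i), G.Adj y z :=
  connected_subslice_has_universal_vertex_general G n σ hL t k u hu
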